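/- Let n ≥ 1, 1 ≤ p, q ≤ ∞ and s ∈ ℝ, and assume that either (s ≥ 0 and q = 1) or s > n/q'. Then for every nontrivial window φ ∈ 𝒮(ℝⁿ) there exists a constant c > 0 such that sup_{x ∈ ℝⁿ} |f(x)| ≤ c ‖f‖_{M^s_{p,q}} for all f ∈ 𝒮(ℝⁿ). -/

import Mathlib

open MeasureTheory Complex ENNReal
open scoped RealInnerProductSpace FourierTransform
open SchwartzMap

noncomputable section

/-- Euclidean `n`-space. -/
abbrev Rn (n : ℕ) := EuclideanSpace ℝ (Fin n)

/-- The short-time Fourier transform of `f` with respect to the window `φ`: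
`V_φ f (x, ξ) = (2π)^{-n/2} ∫ f t * conj (φ (t - x)) * e^{-i t·ξ} dt`. -/
def STFT (n : ℕ) (φ f : Rn n → ℂ) (x ξ : Rn n) : ℂ :=
  ((2 * Real.pi) ^ (-(n : ℝ) / 2) : ℝ) *
    ∫ t : Rn n, f t * (starRingEnd ℂ) (φ (t - x)) *
      Complex.exp (-Complex.I * ((inner ℝ t ξ : ℝ) : ℂ))

variable {n : ℕ}

lemma schwartz_temperate {E F : Type*} [NormedAddCommGroup E] [NormedSpace ℝ E]
    [NormedAddCommGroup F] [NormedSpace ℝ F] (f : SchwartzMap E F) :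
    Function.HasTemperateGrowth ⇑f := by
  refine ⟨f.smooth ⊤, fun N => ⟨0, SchwartzMap.seminorm ℝ 0 N f, fun x => ?_⟩⟩
  simpa using f.norm_iteratedFDeriv_le_seminorm ℝ N x

/-- conjugation of a Schwartz map -/
def conjS {E : Type*} [NormedAddCommGroup E] [NormedSpace ℝ E] (f : SchwartzMap E ℂ) :
    SchwartzMap E ℂ where
  toFun := fun y => (starRingEnd ℂ) (f y)
  smooth' := by
    have : ⇑Complex.conjLIE ∘ ⇑f = fun y => (starRingEnd ℂ) (f y) := rfl
    rw [← this]
    exact Complex.conjLIE.contDiff.comp (f.smooth ⊤)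
  decay' := by
    intro k N
    obtain ⟨C, hC⟩ := f.decay' k N
    refine ⟨C, fun x => ?_⟩
    have : (fun y => (starRingEnd ℂ) (f y)) = ⇑Complex.conjLIE ∘ ⇑f := rfl
    rw [this, Complex.conjLIE.norm_iteratedFDeriv_comp_left]
    exact hC x

@[simp] lemma conjS_apply {E : Type*} [NormedAddCommGroup E] [NormedSpace ℝ E]
    (f : SchwartzMap E ℂ) (x : E) : conjS f x = (starRingEnd ℂ) (f x) := rfl

lemma temperate_sub_const (x : Rn n) :
    Function.HasTemperateGrowth (fun t : Rn n => t - x) := by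
  apply Function.HasTemperateGrowth.of_fderiv (k := 1) (C := 1 + ‖x‖)
  · have : (fderiv ℝ (fun t : Rn n => t - x)) = fun _ => ContinuousLinearMap.id ℝ (Rn n) := by
      ext1 t
      rw [fderiv_sub_const]
      exact fderiv_id
    rw [this]
    exact .const _
  · exact (differentiable_id).sub_const x
  · intro t
    have h1 : ‖t - x‖ ≤ ‖t‖ + ‖x‖ := norm_sub_le _ _
    nlinarith [norm_nonneg t, norm_nonneg x]

lemma antilip_sub_const (x : Rn n) : AntilipschitzWith 1 (fun t : Rn n => t - x) := by
  have : Isometry (fun t : Rn n => t - x) := Isometry.of_dist_eq (fun a b => by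
    simp only [dist_eq_norm, sub_sub_sub_cancel_right])
  exact this.antilipschitz

/-- the product `t ↦ f t * conj (φ (t - x))` as a Schwartz map -/
def winProd (φ f : SchwartzMap (Rn n) ℂ) (x : Rn n) : SchwartzMap (Rn n) ℂ :=
  SchwartzMap.bilinLeftCLM (ContinuousLinearMap.mul ℝ ℂ)
    (schwartz_temperate (SchwartzMap.compCLMOfAntilipschitz ℝ (temperate_sub_const x)
      (antilip_sub_const x) (conjS φ))) f

@[simp] lemma winProd_apply (φ f : SchwartzMap (Rn n) ℂ) (x t : Rn n) :
    winProd φ f x t = f t * (starRingEnd ℂ) (φ (t - x)) := rfl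

lemma two_pi_pos : (0:ℝ) < 2 * Real.pi := by positivity

lemma STFT_eq (φ f : SchwartzMap (Rn n) ℂ) (x ξ : Rn n) :
    STFT n ⇑φ ⇑f x ξ =
      (((2 * Real.pi) ^ (-(n : ℝ) / 2) : ℝ) : ℂ) *
        𝓕 (⇑(winProd φ f x)) ((2 * Real.pi)⁻¹ • ξ) := by
  rw [Real.fourier_eq']
  unfold STFT
  congr 1
  apply integral_congr_ae; filter_upwards with t
  rw [smul_eq_mul, winProd_apply]
  rw [mul_comm]
  congr 1
  congr 1
  rw [real_inner_smul_right]
  push_cast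
  have h2 : ((2:ℂ) * (Real.pi:ℂ)) ≠ 0 := by
    simp [Real.pi_ne_zero]
  field_simp

def C1 (n : ℕ) : ℝ≥0∞ :=
  ENNReal.ofReal (((2 * Real.pi) ^ (-(n : ℝ) / 2))⁻¹) *
    ENNReal.ofReal |(((2 * Real.pi) ^ n : ℝ))⁻¹|

lemma C1_ne_top (n : ℕ) : C1 n ≠ ∞ := by
  simp [C1, ENNReal.mul_ne_top]

lemma c0_pos (n : ℕ) : (0:ℝ) < (2 * Real.pi) ^ (-(n : ℝ) / 2) :=
  Real.rpow_pos_of_pos two_pi_pos _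

lemma STFT_cont_in_xi (φ f : SchwartzMap (Rn n) ℂ) (x : Rn n) :
    Continuous fun ξ => STFT n ⇑φ ⇑f x ξ := by
  have : (fun ξ => STFT n ⇑φ ⇑f x ξ) = fun ξ =>
      (((2 * Real.pi) ^ (-(n : ℝ) / 2) : ℝ) : ℂ) *
        (SchwartzMap.fourierTransformCLM ℂ (winProd φ f x)) ((2 * Real.pi)⁻¹ • ξ) := by
    ext ξ; rw [STFT_eq, SchwartzMap.fourierTransformCLM_apply, SchwartzMap.fourier_coe]
  rw [this]
  exact continuous_const.mul ((SchwartzMap.fourierTransformCLM ℂ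
    (winProd φ f x)).continuous.comp (continuous_const_smul _))

lemma STFT_meas_in_xi (φ f : SchwartzMap (Rn n) ℂ) (x : Rn n) :
    Measurable fun ξ => ENNReal.ofReal ‖STFT n ⇑φ ⇑f x ξ‖ :=
  (ENNReal.continuous_ofReal.comp (STFT_cont_in_xi φ f x).norm).measurable

lemma stepA (φ f : SchwartzMap (Rn n) ℂ) (x x₀ : Rn n) :
    ENNReal.ofReal (‖f x₀‖ * ‖φ (x₀ - x)‖) ≤
      C1 n * ∫⁻ ξ, ENNReal.ofReal ‖STFT n ⇑φ ⇑f x ξ‖ := by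
  set g := winProd φ f x with hg
  have hg_int : Integrable ⇑g := g.integrable
  have hFg : 𝓕 ⇑g = ⇑(SchwartzMap.fourierTransformCLM ℂ g) :=
    rfl
  have hFg_int : Integrable (𝓕 ⇑g) := by
    rw [hFg]; exact (SchwartzMap.fourierTransformCLM ℂ g).integrable
  have h_inv : 𝓕⁻ (𝓕 ⇑g) x₀ = g x₀ :=
    hg_int.fourierInv_fourier_eq hFg_int g.continuous.continuousAt
  have h0 : ‖f x₀‖ * ‖φ (x₀ - x)‖ = ‖g x₀‖ := by
    rw [hg, winProd_apply, norm_mul, RCLike.norm_conj]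
  have h1 : ‖g x₀‖ ≤ ∫ η, ‖𝓕 ⇑g η‖ := by
    rw [← h_inv]
    exact VectorFourier.norm_fourierIntegral_le_integral_norm _ _ _ _ _
  have h2 : ENNReal.ofReal (∫ η, ‖𝓕 ⇑g η‖) = ∫⁻ η, ENNReal.ofReal ‖𝓕 ⇑g η‖ := by
    rw [ofReal_integral_norm_eq_lintegral_enorm hFg_int]
    congr 1; ext η; rw [← ofReal_norm]
  set c₀ : ℝ := (2 * Real.pi) ^ (-(n : ℝ) / 2) with hc₀
  have h3 : ∀ η : Rn n, ENNReal.ofReal ‖𝓕 ⇑g η‖ =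
      ENNReal.ofReal c₀⁻¹ * ENNReal.ofReal ‖STFT n ⇑φ ⇑f x ((2 * Real.pi) • η)‖ := by
    intro η
    have hid : (2 * Real.pi)⁻¹ • ((2 * Real.pi) • η) = η := by
      rw [smul_smul, inv_mul_cancel₀ (ne_of_gt two_pi_pos), one_smul]
    have := STFT_eq φ f x ((2 * Real.pi) • η)
    rw [hid] at this
    rw [this, norm_mul, Complex.norm_real, Real.norm_eq_abs,
      abs_of_pos (c0_pos n), ← ENNReal.ofReal_mul (by positivity), ← mul_assoc,
      inv_mul_cancel₀ (ne_of_gt (c0_pos n)), one_mul]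
  have h4 : ∫⁻ η, ENNReal.ofReal ‖STFT n ⇑φ ⇑f x ((2 * Real.pi) • η)‖ =
      ENNReal.ofReal |(((2 * Real.pi) ^ n : ℝ))⁻¹| *
        ∫⁻ ξ, ENNReal.ofReal ‖STFT n ⇑φ ⇑f x ξ‖ := by
    have hmap := Measure.map_addHaar_smul (volume : Measure (Rn n))
      (ne_of_gt two_pi_pos)
    rw [← lintegral_map (STFT_meas_in_xi φ f x) (measurable_const_smul _), hmap,
      lintegral_smul_measure, smul_eq_mul, finrank_euclideanSpace_fin]
  calc ENNReal.ofReal (‖f x₀‖ * ‖φ (x₀ - x)‖)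
      ≤ ENNReal.ofReal (∫ η, ‖𝓕 ⇑g η‖) := by
        rw [h0]; exact ENNReal.ofReal_le_ofReal h1
    _ = ∫⁻ η, ENNReal.ofReal ‖𝓕 ⇑g η‖ := h2
    _ = ENNReal.ofReal c₀⁻¹ *
          ∫⁻ η, ENNReal.ofReal ‖STFT n ⇑φ ⇑f x ((2 * Real.pi) • η)‖ := by
        simp_rw [h3]
        rw [lintegral_const_mul' _ _ ENNReal.ofReal_ne_top]
    _ = C1 n * ∫⁻ ξ, ENNReal.ofReal ‖STFT n ⇑φ ⇑f x ξ‖ := by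
        rw [h4, C1, mul_assoc]


/-- `L^p`-norm (with exponent `p ∈ [1,∞]`, the value `∞` giving the essential sup)
of an `ℝ≥0∞`-valued function. -/
def lpNormENN {α : Type*} [MeasurableSpace α] (p : ℝ≥0∞) (μ : Measure α)
    (f : α → ℝ≥0∞) : ℝ≥0∞ :=
  if p = ∞ then essSup f μ else (∫⁻ x, f x ^ p.toReal ∂μ) ^ (1 / p.toReal)

section holder
variable {α : Type*} [MeasurableSpace α] {μ : Measure α}

lemma lpNormENN_one (f : α → ℝ≥0∞) : lpNormENN 1 μ f = ∫⁻ x, f x ∂μ := by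
  simp [lpNormENN]

lemma lpNormENN_top (f : α → ℝ≥0∞) : lpNormENN ∞ μ f = essSup f μ := by
  simp [lpNormENN]

lemma hoelderENN (p q : ℝ≥0∞) (hpq : p⁻¹ + q⁻¹ = 1) {f g : α → ℝ≥0∞}
    (hf : AEMeasurable f μ) (hg : AEMeasurable g μ) :
    ∫⁻ x, f x * g x ∂μ ≤ lpNormENN p μ f * lpNormENN q μ g := by
  rcases eq_or_ne p 1 with hp1 | hp1
  · subst hp1
    have hq : q = ∞ := by
      simp only [inv_one] at hpq
      have : q⁻¹ = 0 := by
        have := ENNReal.add_right_inj (a := 1) (b := q⁻¹) (c := 0) ENNReal.one_ne_top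
        rw [← this, add_zero]; exact hpq
      simpa using this
    subst hq
    rw [lpNormENN_one, lpNormENN_top]
    calc ∫⁻ x, f x * g x ∂μ ≤ ∫⁻ x, f x * essSup g μ ∂μ := by
          refine lintegral_mono_ae ?_
          filter_upwards [ae_le_essSup g] with x hx
          exact mul_le_mul_right hx _
      _ = (∫⁻ x, f x ∂μ) * essSup g μ := lintegral_mul_const'' _ hf
  rcases eq_or_ne p ∞ with hptop | hptop
  · subst hptop
    have hq : q = 1 := by
      simp only [ENNReal.inv_top, zero_add] at hpq
      simpa using congrArg (·⁻¹) hpq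
    subst hq
    rw [lpNormENN_one, lpNormENN_top]
    calc ∫⁻ x, f x * g x ∂μ ≤ ∫⁻ x, essSup f μ * g x ∂μ := by
          refine lintegral_mono_ae ?_
          filter_upwards [ae_le_essSup f] with x hx
          exact mul_le_mul_left hx _
      _ = essSup f μ * ∫⁻ x, g x ∂μ := lintegral_const_mul'' _ hg
  -- now 1 < p < ∞
  have hp0 : p ≠ 0 := by
    rintro rfl; simp at hpq
  have hq0 : q ≠ 0 := by
    rintro rfl; simp at hpq
  have hqtop : q ≠ ∞ := by
    rintro rfl
    simp only [ENNReal.inv_top, add_zero] at hpq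
    exact hp1 (by simpa using congrArg (·⁻¹) hpq)
  have hple : (1:ℝ≥0∞) ≤ p := by
    rw [← ENNReal.inv_le_one]
    exact le_trans le_self_add hpq.le
  have hplt : 1 < p := lt_of_le_of_ne hple (Ne.symm hp1)
  have hpR : 1 < p.toReal := by
    rw [← ENNReal.toReal_one]
    exact ENNReal.toReal_strict_mono hptop hplt
  have hsum : p.toReal⁻¹ + q.toReal⁻¹ = 1 := by
    have h1 : (p⁻¹ + q⁻¹).toReal = 1 := by rw [hpq]; simp
    rw [ENNReal.toReal_add (by simp [hp0]) (by simp [hq0])] at h1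
    simpa [ENNReal.toReal_inv] using h1
  have hconj : p.toReal.HolderConjugate q.toReal := Real.holderConjugate_iff.mpr ⟨hpR, by
    simpa [one_div] using hsum⟩
  have := ENNReal.lintegral_mul_le_Lp_mul_Lq μ hconj hf hg
  simp only [Pi.mul_apply] at this
  refine this.trans (le_of_eq ?_)
  rw [lpNormENN, lpNormENN, if_neg hptop, if_neg hqtop]

lemma lpNormENN_const_mul (p : ℝ≥0∞) (hp : 1 ≤ p) (c : ℝ≥0∞) (hc : c ≠ ∞)
    (f : α → ℝ≥0∞) : lpNormENN p μ (fun x => c * f x) = c * lpNormENN p μ f := by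
  rcases eq_or_ne p ∞ with rfl | hptop
  · rw [lpNormENN_top, lpNormENN_top]
    exact ENNReal.essSup_const_mul
  · have hr : 0 < p.toReal := ENNReal.toReal_pos (by
      rintro rfl; exact absurd hp (by simp)) hptop
    rw [lpNormENN, lpNormENN, if_neg hptop, if_neg hptop]
    have h1 : ∀ x, (c * f x) ^ p.toReal = c ^ p.toReal * f x ^ p.toReal := fun x =>
      ENNReal.mul_rpow_of_nonneg _ _ hr.le
    simp_rw [h1]
    rw [lintegral_const_mul' _ _ (by
      exact ENNReal.rpow_ne_top_of_nonneg hr.le hc)]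
    rw [ENNReal.mul_rpow_of_nonneg _ _ (by positivity), ← ENNReal.rpow_mul,
      mul_one_div, div_self (ne_of_gt hr), ENNReal.rpow_one]

end holder

lemma cont_le_essSup {g : Rn n → ℝ≥0∞} (hg : Continuous g) (x : Rn n) :
    g x ≤ essSup g volume := by
  rw [essSup_eq_sInf]
  refine le_sInf fun b hb => ?_
  by_contra hcon
  push_neg at hcon
  have hU : IsOpen {y : Rn n | b < g y} := IsOpen.preimage hg isOpen_Ioi
  have hpos : 0 < volume {y : Rn n | b < g y} :=
    hU.measure_pos volume ⟨x, hcon⟩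
  rw [hb] at hpos
  exact lt_irrefl _ hpos

lemma essSup_eq_iSup_seq {g : Rn n → ℝ≥0∞} (hg : Continuous g) (u : ℕ → Rn n)
    (hu : DenseRange u) : essSup g volume = ⨆ k, g (u k) := by
  refine le_antisymm ?_ (iSup_le fun k => cont_le_essSup hg (u k))
  refine essSup_le_of_ae_le _ (Filter.Eventually.of_forall fun x => ?_)
  refine le_of_forall_lt fun b hb => ?_
  have hU : IsOpen {y : Rn n | b < g y} := IsOpen.preimage hg isOpen_Ioi
  obtain ⟨k, hk⟩ := hu.exists_mem_open hU ⟨x, hb⟩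
  exact lt_of_lt_of_le hk (le_iSup (fun k => g (u k)) k)

lemma STFT_cont_joint (φ f : SchwartzMap (Rn n) ℂ) :
    Continuous fun z : Rn n × Rn n => STFT n ⇑φ ⇑f z.1 z.2 := by
  unfold STFT
  apply continuous_const.mul
  apply continuous_of_dominated
    (bound := fun t => ‖f t‖ * ‖φ.toBoundedContinuousFunction‖)
  · intro z
    apply Continuous.aestronglyMeasurable
    refine (f.continuous.mul ?_).mul ?_
    · exact ((φ.continuous.comp (continuous_id.sub continuous_const))).star
    · refine Complex.continuous_exp.comp (continuous_const.mul ?_)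
      exact Complex.continuous_ofReal.comp (continuous_id.inner continuous_const)
  · intro z
    refine Filter.Eventually.of_forall fun t => ?_
    have hexp : ‖Complex.exp (-Complex.I * ((inner ℝ t z.2 : ℝ) : ℂ))‖ = 1 := by
      rw [Complex.norm_exp]
      simp [Complex.mul_re]
    rw [norm_mul, hexp, mul_one, norm_mul, RCLike.norm_conj]
    have : ‖φ (t - z.1)‖ ≤ ‖φ.toBoundedContinuousFunction‖ := by
      simpa using φ.toBoundedContinuousFunction.norm_coe_le_norm (t - z.1)
    exact mul_le_mul_of_nonneg_left this (norm_nonneg _)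
  · exact (f.integrable).norm.mul_const _
  · refine Filter.Eventually.of_forall fun t => ?_
    refine (continuous_const.mul ?_).mul ?_
    · exact ((φ.continuous.comp (continuous_const.sub continuous_fst))).star
    · refine Complex.continuous_exp.comp (continuous_const.mul ?_)
      exact Complex.continuous_ofReal.comp (continuous_const.inner continuous_snd)


/-- The weighted modulation space (quasi-)norm `‖f‖_{M^s_{p,q}}` with window `φ`:
`( ∫ ( ∫ |V_φ f(x,ξ)|^p ⟨ξ⟩^{sp} dx )^{q/p} dξ )^{1/q}` (usual modifications for `p,q = ∞`). -/
def MNorm (n : ℕ) (φ : SchwartzMap (Rn n) ℂ) (p q : ℝ≥0∞) (s : ℝ)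
    (f : Rn n → ℂ) : ℝ≥0∞ :=
  lpNormENN q volume fun ξ : Rn n =>
    lpNormENN p volume fun x : Rn n =>
      ENNReal.ofReal (‖STFT n (⇑φ) f x ξ‖ * (1 + ‖ξ‖ ^ 2) ^ (s / 2))

/-- The conjugate exponent `q'` of `q ∈ [1,∞]`, so that `1/q + 1/q' = 1`. -/
def conjExp (q : ℝ≥0∞) : ℝ≥0∞ := (1 - 1 / q)⁻¹

/-- The real number `n / q'`, where `q'` is the conjugate exponent of `q`. -/
def nOverConj (n : ℕ) (q : ℝ≥0∞) : ℝ := ((n : ℝ≥0∞) / conjExp q).toReal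

lemma conjExp_inv_add (q : ℝ≥0∞) (hq : 1 ≤ q) : (conjExp q)⁻¹ + q⁻¹ = 1 := by
  rw [conjExp, inv_inv, one_div]
  exact tsub_add_cancel_of_le (ENNReal.inv_le_one.2 hq)

lemma one_le_conjExp (q : ℝ≥0∞) : 1 ≤ conjExp q := by
  rw [conjExp, ENNReal.one_le_inv]
  exact tsub_le_self


theorem statement1 (n : ℕ) (hn : 1 ≤ n) (p q : ℝ≥0∞) (hp : 1 ≤ p) (hq : 1 ≤ q)
    (s : ℝ) (hs : (0 ≤ s ∧ q = 1) ∨ nOverConj n q < s)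
    (φ : SchwartzMap (Rn n) ℂ) (hφ : φ ≠ 0) :
    ∃ c : ℝ, 0 < c ∧ ∀ f : SchwartzMap (Rn n) ℂ, ∀ x : Rn n,
      ENNReal.ofReal ‖f x‖ ≤ ENNReal.ofReal c * MNorm n φ p q s (⇑f) := by
  -- a point where the window is nonzero, with a quantitative neighbourhood
  obtain ⟨a, ha⟩ : ∃ a : Rn n, φ a ≠ 0 := by
    by_contra hcon
    push_neg at hcon
    exact hφ (SchwartzMap.ext fun t => by simpa using hcon t)
  set δ : ℝ := ‖φ a‖ / 2 with hδdef
  have hδpos : 0 < δ := by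
    have := norm_pos_iff.2 ha
    positivity
  have hV : IsOpen {y : Rn n | δ < ‖φ y‖} :=
    IsOpen.preimage (continuous_norm.comp φ.continuous) isOpen_Ioi
  have haV : a ∈ {y : Rn n | δ < ‖φ y‖} := by
    simp only [Set.mem_setOf_eq, hδdef]
    have := norm_pos_iff.2 ha
    linarith
  obtain ⟨ε, hεpos, hεsub⟩ := Metric.isOpen_iff.1 hV a haV
  set r : ℝ := ε / 2 with hrdef
  have hrpos : 0 < r := by positivity
  have hball : ∀ y ∈ Metric.closedBall a r, δ ≤ ‖φ y‖ := by
    intro y hy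
    have : y ∈ Metric.ball a ε := by
      rw [Metric.mem_closedBall] at hy
      rw [Metric.mem_ball]
      linarith
    exact le_of_lt (hεsub this)
  set K : ℝ≥0∞ := volume (Metric.closedBall a r) with hKdef
  have hKpos : 0 < K := by
    exact lt_of_lt_of_le (Metric.measure_ball_pos volume a hrpos)
      (measure_mono Metric.ball_subset_closedBall)
  have hKtop : K ≠ ∞ := (measure_closedBall_lt_top).ne
  -- weights
  set W : Rn n → ℝ≥0∞ := fun ξ => ENNReal.ofReal ((1 + ‖ξ‖ ^ 2) ^ (s / 2)) with hWdef
  set W' : Rn n → ℝ≥0∞ := fun ξ => ENNReal.ofReal ((1 + ‖ξ‖ ^ 2) ^ (-s / 2)) with hW'def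
  have hbase : ∀ ξ : Rn n, (0:ℝ) < 1 + ‖ξ‖ ^ 2 := fun ξ => by positivity
  have hW'W : ∀ ξ, W' ξ * W ξ = 1 := by
    intro ξ
    simp only [hW'def, hWdef]
    rw [← ENNReal.ofReal_mul (by positivity), ← Real.rpow_add (hbase ξ), neg_div,
      neg_add_cancel, Real.rpow_zero, ENNReal.ofReal_one]
  have hW'meas : Measurable W' := by
    apply ENNReal.measurable_ofReal.comp
    apply Continuous.measurable
    exact (continuous_const.add ((continuous_norm).pow 2)).rpow_const
      (fun ξ => Or.inl (ne_of_gt (hbase ξ)))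
  have hWmeas : Measurable W := by
    apply ENNReal.measurable_ofReal.comp
    apply Continuous.measurable
    exact (continuous_const.add ((continuous_norm).pow 2)).rpow_const
      (fun ξ => Or.inl (ne_of_gt (hbase ξ)))
  -- the constant `Cs`
  set Cs : ℝ≥0∞ := lpNormENN (conjExp q) volume W' with hCs
  have hCs_top : Cs ≠ ∞ := by
    rcases eq_or_ne (conjExp q) ∞ with hq'top | hq'top
    · -- `q' = ∞` : then `s > 0` or `s ≥ 0`, and `essSup W' ≤ 1`
      have hs0 : 0 ≤ s := by
        rcases hs with ⟨hs0, _⟩ | hs1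
        · exact hs0
        · have : nOverConj n q = 0 := by
            rw [nOverConj, hq'top]
            simp
          rw [this] at hs1
          exact hs1.le
      rw [hCs, hq'top, lpNormENN_top]
      refine ne_top_of_le_ne_top ENNReal.one_ne_top
        (essSup_le_of_ae_le _ (Filter.Eventually.of_forall fun ξ => ?_))
      simp only [hW'def]
      refine le_trans (ENNReal.ofReal_le_ofReal
        (Real.rpow_le_one_of_one_le_of_nonpos
          (le_add_of_nonneg_right (by positivity))
          (by rw [neg_div]; exact neg_nonpos.2 (by positivity)))) (by simp)
    · -- `q' < ∞` : use integrability of the Japanese bracket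
      have hq'0 : conjExp q ≠ 0 := (lt_of_lt_of_le zero_lt_one (one_le_conjExp q)).ne'
      set ρ : ℝ := (conjExp q).toReal with hρ
      have hρpos : 0 < ρ := ENNReal.toReal_pos hq'0 hq'top
      have hq1 : q ≠ 1 := by
        intro hq1
        rw [hq1] at hq'top
        simp [conjExp] at hq'top
      have hsρ : (n : ℝ) < s * ρ := by
        rcases hs with ⟨_, hq1'⟩ | hs1
        · exact absurd hq1' hq1
        · have hnoc : nOverConj n q = (n : ℝ) / ρ := by
            rw [nOverConj, ENNReal.toReal_div]
            simp [hρ]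
          rw [hnoc, div_lt_iff₀ hρpos] at hs1
          linarith
      have hint : Integrable (fun ξ : Rn n => (1 + ‖ξ‖ ^ 2) ^ (-(s * ρ) / 2)) volume := by
        apply integrable_rpow_neg_one_add_norm_sq
        rw [finrank_euclideanSpace_fin]
        exact hsρ
      rw [hCs, lpNormENN, if_neg hq'top]
      apply ENNReal.rpow_ne_top_of_nonneg (by positivity)
      have heq : ∀ ξ : Rn n, W' ξ ^ ρ =
          ENNReal.ofReal ((1 + ‖ξ‖ ^ 2) ^ (-(s * ρ) / 2)) := by
        intro ξ
        simp only [hW'def]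
        rw [ENNReal.ofReal_rpow_of_nonneg (Real.rpow_nonneg (hbase ξ).le _) hρpos.le]
        congr 1
        rw [← Real.rpow_mul (hbase ξ).le]
        congr 1
        ring
      rw [lintegral_congr heq]
      exact hint.lintegral_lt_top.ne
  -- conjugate exponent identities
  have hp'q : (conjExp p)⁻¹ + p⁻¹ = 1 := conjExp_inv_add p hp
  have hq'q : (conjExp q)⁻¹ + q⁻¹ = 1 := conjExp_inv_add q hq
  -- the constant bounding the `p'`-norm of ball indicators
  set κ : ℝ≥0∞ := 1 + K ^ (1/(conjExp p).toReal) with hκ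
  have hκtop : κ ≠ ∞ := by
    rw [hκ]
    exact ENNReal.add_ne_top.2 ⟨ENNReal.one_ne_top,
      ENNReal.rpow_ne_top_of_nonneg (by positivity) hKtop⟩
  -- dense sequence, for measurability of essential suprema
  obtain ⟨u, hu⟩ := TopologicalSpace.exists_dense_seq (Rn n)
  -- the total constant
  set L : ℝ≥0∞ := ENNReal.ofReal δ * K with hL
  have hL0 : L ≠ 0 := by
    rw [hL]
    exact mul_ne_zero (ENNReal.ofReal_pos.2 hδpos).ne' hKpos.ne'
  have hLtop : L ≠ ∞ := ENNReal.mul_ne_top ENNReal.ofReal_ne_top hKtop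
  set Ctot : ℝ≥0∞ := L⁻¹ * (C1 n * (κ * Cs)) with hCtot
  have hCtot_top : Ctot ≠ ∞ :=
    ENNReal.mul_ne_top (ENNReal.inv_ne_top.2 hL0)
      (ENNReal.mul_ne_top (C1_ne_top n) (ENNReal.mul_ne_top hκtop hCs_top))
  refine ⟨Ctot.toReal + 1, by positivity, ?_⟩
  intro f x₀
  set F : Rn n × Rn n → ℝ≥0∞ := fun z => ENNReal.ofReal ‖STFT n ⇑φ ⇑f z.1 z.2‖ with hF
  have hFcont : Continuous F := ENNReal.continuous_ofReal.comp (STFT_cont_joint φ f).norm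
  have hFm : Measurable F := hFcont.measurable
  set Gp : Rn n → ℝ≥0∞ := fun ξ => lpNormENN p volume (fun x => F (x, ξ)) with hGp
  have hGp_meas : Measurable Gp := by
    rcases eq_or_ne p ∞ with rfl | hptop
    · have hGpeq : Gp = fun ξ => ⨆ k, F (u k, ξ) := by
        funext ξ
        show lpNormENN ⊤ volume (fun x => F (x, ξ)) = _
        rw [lpNormENN_top]
        exact essSup_eq_iSup_seq (hFcont.comp (continuous_id.prodMk continuous_const)) u hu
      rw [hGpeq]
      exact Measurable.iSup fun k => hFm.comp (measurable_const.prodMk measurable_id)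
    · have hin : Measurable fun ξ => ∫⁻ x, F (x, ξ) ^ p.toReal ∂volume := by
        apply Measurable.lintegral_prod_right' (f := fun z : Rn n × Rn n => F (z.2, z.1) ^ p.toReal)
        exact ENNReal.continuous_rpow_const.measurable.comp (hFm.comp measurable_swap)
      have hGpeq : Gp = fun ξ => (∫⁻ x, F (x, ξ) ^ p.toReal ∂volume) ^ (1/p.toReal) := by
        funext ξ
        show lpNormENN p volume (fun x => F (x, ξ)) = _
        rw [lpNormENN, if_neg hptop]
      rw [hGpeq]
      exact ENNReal.continuous_rpow_const.measurable.comp hin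
  -- the key chain of inequalities
  have key : ENNReal.ofReal ‖f x₀‖ * L ≤ C1 n * (κ * (Cs * MNorm n φ p q s ⇑f)) := by
    set S : Set (Rn n) := Metric.closedBall (x₀ - a) r with hSdef
    have hS : MeasurableSet S := measurableSet_closedBall
    have hvolS : volume S = K := by
      rw [hKdef]
      exact (Measure.addHaar_closedBall_center volume (x₀ - a) r).trans
        (Measure.addHaar_closedBall_center volume a r).symm
    calc ENNReal.ofReal ‖f x₀‖ * L
        = ENNReal.ofReal (‖f x₀‖ * δ) * K := by
          rw [ENNReal.ofReal_mul (norm_nonneg _), hL]; ring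
      _ = ∫⁻ _ in S, ENNReal.ofReal (‖f x₀‖ * δ) ∂volume := by
          rw [setLIntegral_const, hvolS]
      _ ≤ ∫⁻ x in S, ENNReal.ofReal (‖f x₀‖ * ‖φ (x₀ - x)‖) ∂volume := by
          refine setLIntegral_mono ?_ fun x hx => ?_
          · apply ENNReal.measurable_ofReal.comp
            apply Continuous.measurable
            exact continuous_const.mul
              ((φ.continuous.comp (continuous_const.sub continuous_id)).norm)
          · refine ENNReal.ofReal_le_ofReal
              (mul_le_mul_of_nonneg_left (hball _ ?_) (norm_nonneg _))
            rw [Metric.mem_closedBall, dist_eq_norm] at hx ⊢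
            have : x₀ - x - a = -(x - (x₀ - a)) := by abel
            rw [this, norm_neg]
            exact hx
      _ ≤ ∫⁻ x in S, C1 n * ∫⁻ ξ, F (x, ξ) ∂volume ∂volume := by
          refine setLIntegral_mono ?_ fun x _ => stepA φ f x x₀
          exact (hFm.lintegral_prod_right').const_mul _
      _ = C1 n * ∫⁻ x in S, ∫⁻ ξ, F (x, ξ) ∂volume ∂volume :=
          lintegral_const_mul' _ _ (C1_ne_top n)
      _ = C1 n * ∫⁻ ξ, ∫⁻ x in S, F (x, ξ) ∂volume ∂volume := by
          congr 1
          exact lintegral_lintegral_swap hFm.aemeasurable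
      _ ≤ C1 n * ∫⁻ ξ, κ * Gp ξ ∂volume := by
          refine mul_le_mul_right (lintegral_mono fun ξ => ?_) _
          have hind : ∫⁻ x in S, F (x, ξ) ∂volume
              = ∫⁻ x, S.indicator (fun _ => (1:ℝ≥0∞)) x * F (x, ξ) ∂volume := by
            rw [← lintegral_indicator hS]
            congr 1; funext x
            by_cases hx : x ∈ S <;> simp [Set.indicator, hx]
          rw [hind]
          refine le_trans (hoelderENN (conjExp p) p hp'q
            ((measurable_const.indicator hS).aemeasurable)
            ((hFm.comp (measurable_id.prodMk measurable_const)).aemeasurable)) ?_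
          refine mul_le_mul_left ?_ _
          -- indicator norm bound
          rcases eq_or_ne (conjExp p) ∞ with h | h
          · rw [h, lpNormENN_top]
            refine le_trans (essSup_le_of_ae_le _
              (Filter.Eventually.of_forall fun x => ?_)) le_self_add
            by_cases hx : x ∈ S <;> simp [Set.indicator, hx]
          · rw [lpNormENN, if_neg h]
            have hρ2 : 0 < (conjExp p).toReal :=
              ENNReal.toReal_pos (lt_of_lt_of_le zero_lt_one (one_le_conjExp p)).ne' h
            have hpow : ∀ x, (S.indicator (fun _ => (1:ℝ≥0∞)) x) ^ (conjExp p).toReal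
                = S.indicator (fun _ => (1:ℝ≥0∞)) x := by
              intro x
              by_cases hx : x ∈ S <;>
                simp [Set.indicator, hx, ENNReal.zero_rpow_of_pos hρ2]
            simp_rw [hpow]
            rw [lintegral_indicator hS, setLIntegral_one, hvolS]
            exact le_add_self
      _ = C1 n * (κ * ∫⁻ ξ, Gp ξ ∂volume) := by
          rw [lintegral_const_mul' _ _ hκtop]
      _ ≤ C1 n * (κ * (Cs * MNorm n φ p q s ⇑f)) := by
          refine mul_le_mul_right (mul_le_mul_right ?_ _) _
          have hGW : ∀ ξ, Gp ξ = W' ξ * (W ξ * Gp ξ) := fun ξ => by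
            rw [← mul_assoc, hW'W, one_mul]
          calc ∫⁻ ξ, Gp ξ ∂volume
              = ∫⁻ ξ, W' ξ * (W ξ * Gp ξ) ∂volume := by
                congr 1; funext ξ; exact hGW ξ
            _ ≤ lpNormENN (conjExp q) volume W'
                  * lpNormENN q volume (fun ξ => W ξ * Gp ξ) :=
                hoelderENN (conjExp q) q hq'q hW'meas.aemeasurable
                  ((hWmeas.mul hGp_meas).aemeasurable)
            _ = Cs * MNorm n φ p q s ⇑f := by
                congr 1
                rw [MNorm]
                congr 1; funext ξ
                rw [hGp, ← lpNormENN_const_mul p hp (W ξ) ENNReal.ofReal_ne_top]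
                congr 1; funext x
                rw [hWdef, hF, ENNReal.ofReal_mul (norm_nonneg _)]
                ring
  -- conclude
  have final : ENNReal.ofReal ‖f x₀‖ ≤ Ctot * MNorm n φ p q s ⇑f := by
    calc ENNReal.ofReal ‖f x₀‖
        = (L⁻¹ * L) * ENNReal.ofReal ‖f x₀‖ := by
          rw [ENNReal.inv_mul_cancel hL0 hLtop, one_mul]
      _ = L⁻¹ * (ENNReal.ofReal ‖f x₀‖ * L) := by ring
      _ ≤ L⁻¹ * (C1 n * (κ * (Cs * MNorm n φ p q s ⇑f))) := mul_le_mul_right key _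
      _ = Ctot * MNorm n φ p q s ⇑f := by rw [hCtot]; ring
  refine final.trans (mul_le_mul_left ?_ _)
  calc Ctot = ENNReal.ofReal Ctot.toReal := (ENNReal.ofReal_toReal hCtot_top).symm
    _ ≤ ENNReal.ofReal (Ctot.toReal + 1) := ENNReal.ofReal_le_ofReal (by linarith)

end
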